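/- If T is a κ-Souslin tree and f : S → T is a weak embedding from a κ-tree S to T, and S' is the set of nodes of S with κ-many extensions in S, then the image f[S'] has size κ. -/

import Mathlib

open Cardinal Ordinal Set

noncomputable section

open scoped Classical in
/-- The height of a node in a tree-like partial order: the order type of its set
of strict predecessors (0 if that set happens not to be well-ordered). -/
def heightIn {α : Type} [PartialOrder α] (x : α) : Ordinal :=
  if h : IsWellOrder {y // y ∈ {y : α | y < x}} (Subrel (· < ·) {y : α | y < x}) then
    @Ordinal.type _ _ h
  else 0

/-- `(α, <)` is a `κ`-tree: predecessors are well-ordered, every level below `κ`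
is nonempty of size `< κ`, and the `κ`-th level is empty (all heights are `< κ`). -/
structure IsKTree (κ : Cardinal) (α : Type) [PartialOrder α] : Prop where
  wo : ∀ x : α, IsWellOrder {y // y ∈ {y : α | y < x}} (Subrel (· < ·) {y : α | y < x})
  height_lt : ∀ x : α, heightIn x < κ.ord
  level_ne : ∀ o < κ.ord, ∃ x : α, heightIn x = o
  level_small : ∀ o < κ.ord, #{x : α | heightIn x = o} < κ

/-- An `o`-branch: a chain whose set of heights is exactly `{β | β < o}`. -/
def IsBranch {α : Type} [PartialOrder α] (B : Set α) (o : Ordinal) : Prop :=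
  IsChain (· < ·) B ∧ heightIn '' B = Set.Iio o

/-- A vanishing branch: one with no upper bound in the tree. -/
def Vanishing {α : Type} [PartialOrder α] (B : Set α) : Prop :=
  ¬ ∃ y : α, ∀ x ∈ B, x ≤ y

/-- A `κ`-tree is full iff for every limit `o < κ` there is at most one
vanishing `o`-branch. -/
def IsFull (κ : Cardinal) (α : Type) [PartialOrder α] : Prop :=
  ∀ o : Ordinal, Order.IsSuccLimit o → o < κ.ord →
    ∀ B₁ B₂ : Set α, IsBranch B₁ o → Vanishing B₁ → IsBranch B₂ o → Vanishing B₂ → B₁ = B₂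

/-- A `κ`-branch: a chain meeting every level below `κ`. -/
def IsKBranch (κ : Cardinal) {α : Type} [PartialOrder α] (B : Set α) : Prop :=
  IsChain (· < ·) B ∧ ∀ o < κ.ord, ∃ x ∈ B, heightIn x = o

/-- `κ`-Aronszajn: a `κ`-tree with no `κ`-branch. -/
def IsAronszajn (κ : Cardinal) (α : Type) [PartialOrder α] : Prop :=
  ¬ ∃ B : Set α, IsKBranch κ B

/-- Normality: every node has extensions at every higher level below `κ`. -/
def IsNormalTree (κ : Cardinal) (α : Type) [PartialOrder α] : Prop :=
  ∀ x : α, ∀ o : Ordinal, heightIn x < o → o < κ.ord → ∃ y : α, x < y ∧ heightIn y = o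

/-- `D` is a club (closed unbounded set) in the ordinal `o`. -/
def IsClubIn (D : Set Ordinal) (o : Ordinal) : Prop :=
  D ⊆ Set.Iio o ∧ (∀ a < o, ∃ b ∈ D, a ≤ b) ∧
    ∀ a < o, (D ∩ Set.Iio a).Nonempty → sSup (D ∩ Set.Iio a) = a → a ∈ D

/-- `S` is stationary in the ordinal `o`. -/
def StatIn (S : Set Ordinal) (o : Ordinal) : Prop :=
  ∀ D : Set Ordinal, IsClubIn D o → (S ∩ D).Nonempty

/-- The strict order of the product tree `S ⊗ T`: pairs of nodes of equal
height, ordered coordinatewise. -/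
def prodLt {α β : Type} [PartialOrder α] [PartialOrder β]
    (p q : {p : α × β // heightIn p.1 = heightIn p.2}) : Prop :=
  p.1.1 < q.1.1 ∧ p.1.2 < q.1.2

/-- No chain of size `κ` with respect to the strict relation `lt`. -/
def RelNoKChains {γ : Type} (lt : γ → γ → Prop) (κ : Cardinal) : Prop :=
  ∀ C : Set γ, (∀ x ∈ C, ∀ y ∈ C, x ≠ y → lt x y ∨ lt y x) → #C < κ

/-- No antichain of size `κ`: every `κ`-sized set contains two `lt`-comparable
elements. -/
def RelNoKAntichains {γ : Type} (lt : γ → γ → Prop) (κ : Cardinal) : Prop :=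
  ∀ A : Set γ, (∀ x ∈ A, ∀ y ∈ A, x ≠ y → ¬ lt x y ∧ ¬ lt y x) → #A < κ

/-- `κ`-Souslin with respect to the strict relation `lt`. -/
def RelSouslin {γ : Type} (lt : γ → γ → Prop) (κ : Cardinal) : Prop :=
  RelNoKChains lt κ ∧ RelNoKAntichains lt κ

instance instWO_toType (o : Ordinal.{0}) : IsWellOrder o.ToType (· < ·) := isWellOrder_lt

theorem mk_heightIn_lt_le {α : Type} [PartialOrder α] (o : Ordinal.{0}) :
    #{x : α | heightIn x < o} ≤
      Cardinal.sum (fun i : o.ToType =>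
        #{x : α | heightIn x = typein (α := o.ToType) (· < ·) i}) := by
  rw [← mk_sigma]
  have key : ∀ x : {x : α | heightIn x < o},
      heightIn x.1 = typein (α := o.ToType) (· < ·) (ToType.mk ⟨heightIn x.1, x.2⟩) :=
    fun x => (typein_enum _ _).symm
  exact mk_le_of_injective (f := fun x =>
    ⟨ToType.mk ⟨heightIn x.1, x.2⟩, ⟨x.1, key x⟩⟩)
    (fun x y h => Subtype.ext (congrArg (fun p => p.2.1) h))

theorem mk_heightIn_lt_lt {κ : Cardinal.{0}} (hreg : κ.IsRegular) {α : Type} [PartialOrder α]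
    (hS : IsKTree κ α) {o : Ordinal} (ho : o < κ.ord) : #{x : α | heightIn x < o} < κ :=
  (mk_heightIn_lt_le o).trans_lt (sum_lt_of_isRegular hreg
    (by rw [mk_toType]; exact lt_ord.1 ho)
    fun i => hS.level_small _ ((typein_lt_self i).trans ho))

theorem ktree_mk_le {κ : Cardinal.{0}} (hreg : κ.IsRegular) {α : Type} [PartialOrder α]
    (hS : IsKTree κ α) : #α ≤ κ := by
  have huniv : {x : α | heightIn x < κ.ord} = Set.univ := eq_univ_of_forall fun x => hS.height_lt x
  have h1 : #α ≤ Cardinal.sum (fun i : κ.ord.ToType =>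
      #{x : α | heightIn x = typein (α := κ.ord.ToType) (· < ·) i}) := by
    have := mk_heightIn_lt_le (α := α) κ.ord
    rwa [huniv, mk_univ] at this
  refine h1.trans ?_
  calc Cardinal.sum (fun i : κ.ord.ToType =>
        #{x : α | heightIn x = typein (α := κ.ord.ToType) (· < ·) i})
      ≤ Cardinal.sum (fun _ : κ.ord.ToType => κ) :=
        Cardinal.sum_le_sum _ _ fun i => (hS.level_small _ (typein_lt_self i)).le
    _ = #(κ.ord.ToType) * κ := sum_const' _ _
    _ = κ * κ := by rw [mk_toType, card_ord]
    _ = κ := mul_eq_self hreg.aleph0_le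

theorem ktree_mk_ge {κ : Cardinal.{0}} {α : Type} [PartialOrder α]
    (hS : IsKTree κ α) : κ ≤ #α := by
  have key : ∀ i : κ.ord.ToType, ∃ x : α,
      heightIn x = typein (α := κ.ord.ToType) (· < ·) i :=
    fun i => hS.level_ne _ (typein_lt_self i)
  have : κ = #(κ.ord.ToType) := by rw [mk_toType, card_ord]
  rw [this]
  refine mk_le_of_injective (f := fun i => (key i).choose) (fun i j h => ?_)
  apply typein_injective (α := κ.ord.ToType) (· < ·)
  have h' : (key i).choose = (key j).choose := h
  rw [← (key i).choose_spec, ← (key j).choose_spec, h']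

theorem heightIn_eq {α : Type} [PartialOrder α] (x : α)
    (h : IsWellOrder {y // y ∈ {y : α | y < x}} (Subrel (· < ·) {y : α | y < x})) :
    heightIn x = @Ordinal.type _ _ h := dif_pos h

theorem heightIn_pred {α : Type} [PartialOrder α]
    (hwo : ∀ x : α, IsWellOrder {y // y ∈ {y : α | y < x}} (Subrel (· < ·) {y : α | y < x}))
    {s y : α} (hsy : s < y) :
    heightIn s = @Ordinal.typein _ (Subrel (· < ·) {z : α | z < y}) (hwo y)
      ⟨s, hsy⟩ := by
  rw [heightIn_eq s (hwo s), ← @Ordinal.type_subrel _ _ (hwo y) ⟨s, hsy⟩]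
  refine Ordinal.type_eq.2 ⟨@RelIso.mk _ _ _ _
    (Equiv.mk (fun z => ⟨⟨z.1, lt_trans z.2 hsy⟩, z.2⟩) (fun b => ⟨b.1.1, b.2⟩)
      (fun z => rfl) (fun b => rfl)) ?_⟩
  · intro a b
    rfl

theorem exists_pred_at {α : Type} [PartialOrder α]
    (hwo : ∀ x : α, IsWellOrder {y // y ∈ {y : α | y < x}} (Subrel (· < ·) {y : α | y < x}))
    {y : α} {o : Ordinal} (ho : o < heightIn y) :
    ∃ s : α, heightIn s = o ∧ s < y := by
  rw [heightIn_eq y (hwo y)] at ho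
  obtain ⟨b, hb⟩ := @Ordinal.typein_surj _ _ (hwo y) _ ho
  exact ⟨b.1, by rw [heightIn_pred hwo b.2]; exact hb, b.2⟩

theorem heightIn_le_of_map {α β : Type} [PartialOrder α] [PartialOrder β]
    (hwoa : ∀ x : α, IsWellOrder {y // y ∈ {y : α | y < x}} (Subrel (· < ·) {y : α | y < x}))
    (hwob : ∀ x : β, IsWellOrder {y // y ∈ {y : β | y < x}} (Subrel (· < ·) {y : β | y < x}))
    (f : α → β) (hf : ∀ s s' : α, s < s' → f s < f s') (s : α) :
    heightIn s ≤ heightIn (f s) := by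
  rw [heightIn_eq s (hwoa s), heightIn_eq (f s) (hwob (f s))]
  haveI := hwoa s
  haveI := hwob (f s)
  haveI htri : IsTrichotomous {y // y ∈ {y : α | y < s}} (Subrel (· < ·) {y : α | y < s}) :=
    (hwoa s).toTrichotomous
  haveI hirr : IsAsymm {y // y ∈ {y : β | y < f s}} (Subrel (· < ·) {y : β | y < f s}) :=
    ⟨fun a b h h' => absurd (lt_trans (h : a.1 < b.1) h') (lt_irrefl a.1)⟩
  exact @RelEmbedding.ordinal_type_le _ _ _ _ (hwoa s) (hwob (f s)) (@RelEmbedding.ofMonotone _ _ (Subrel (· < ·) {y : α | y < s})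
    (Subrel (· < ·) {y : β | y < f s}) htri hirr
    (fun z => (⟨f z.1, hf _ _ z.2⟩ : {y // y ∈ {y : β | y < f s}}))
    (fun a b h => hf _ _ h))

theorem exists_big_cone {κ : Cardinal.{0}} (hreg : κ.IsRegular) {α : Type} [PartialOrder α]
    (hS : IsKTree κ α) {o : Ordinal} (ho : o < κ.ord) :
    ∃ s : α, heightIn s = o ∧ #{y : α | s < y} = κ := by
  have hord := isSuccLimit_ord hreg.aleph0_le
  have hcompl : #{y : α | heightIn y ≤ o} < κ := by
    have he : {y : α | heightIn y ≤ o} = {y : α | heightIn y < o + 1} := by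
      ext y; simp only [mem_setOf_eq]; rw [Ordinal.add_one_eq_succ, Order.lt_succ_iff]
    rw [he]
    exact mk_heightIn_lt_lt hreg hS (by rw [Ordinal.add_one_eq_succ]; exact hord.succ_lt ho)
  have hU : κ ≤ #{y : α | o < heightIn y} := by
    by_contra h'
    have h1 := mk_sum_compl {y : α | o < heightIn y}
    have h2 : {y : α | o < heightIn y}ᶜ = {y : α | heightIn y ≤ o} := by
      ext y; simp [not_lt]
    rw [h2] at h1
    have := ktree_mk_ge hS
    rw [← h1] at this
    exact absurd this (not_le.2 (Cardinal.add_lt_of_lt hreg.aleph0_le (not_le.1 h') hcompl))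
  by_contra hcone
  push_neg at hcone
  have hcone' : ∀ s : {x : α | heightIn x = o}, #{y : α | s.1 < y} < κ := by
    intro s
    refine lt_of_le_of_ne ((mk_set_le _).trans (ktree_mk_le hreg hS)) (hcone s.1 s.2)
  have hsub : {y : α | o < heightIn y} ⊆ ⋃ s : {x : α | heightIn x = o}, {y : α | s.1 < y} := by
    intro y hy
    obtain ⟨s, hs, hsy⟩ := exists_pred_at hS.wo hy
    exact mem_iUnion.2 ⟨⟨s, hs⟩, hsy⟩
  have : #{y : α | o < heightIn y} < κ :=
    ((mk_le_mk_of_subset hsub).trans mk_iUnion_le_sum_mk).trans_lt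
      (sum_lt_of_isRegular hreg (hS.level_small o ho) hcone')
  exact absurd hU (not_le.2 this)

theorem image_large {κ : Cardinal.{0}} (hreg : κ.IsRegular)
    {α β : Type} [PartialOrder α] [PartialOrder β]
    (hS : IsKTree κ α) (hT : IsKTree κ β)
    (f : α → β) (hf : ∀ s s' : α, s < s' → f s < f s') :
    #(f '' {s : α | #{y : α | s < y} = κ}) = κ := by
  set S' := {s : α | #{y : α | s < y} = κ} with hS'
  have hub : #(f '' S') ≤ κ := mk_image_le.trans ((mk_set_le _).trans (ktree_mk_le hreg hS))
  refine le_antisymm hub (le_of_not_gt fun hlt => ?_)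
  have hsup : (⨆ t : (f '' S'), heightIn t.1) < κ.ord :=
    iSup_lt_ord (by rw [hreg.cof_eq]; exact hlt) (fun t => hT.height_lt _)
  have hord := isSuccLimit_ord hreg.aleph0_le
  have ho : (⨆ t : (f '' S'), heightIn t.1) + 1 < κ.ord := by
    rw [Ordinal.add_one_eq_succ]; exact hord.succ_lt hsup
  obtain ⟨s, hs, hcone⟩ := exists_big_cone hreg hS ho
  have hmem : f s ∈ f '' S' := ⟨s, hcone, rfl⟩
  have h1 : (⨆ t : (f '' S'), heightIn t.1) + 1 ≤ heightIn (f s) := by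
    rw [← hs]; exact heightIn_le_of_map hS.wo hT.wo f hf s
  have h2 : heightIn (f s) ≤ ⨆ t : (f '' S'), heightIn t.1 :=
    le_ciSup (Ordinal.bddAbove_range _) (⟨f s, hmem⟩ : (f '' S'))
  have h3 := h1.trans h2
  rw [Ordinal.add_one_eq_succ, Order.succ_le_iff] at h3
  exact lt_irrefl _ h3


/-- If `T` is a `κ`-Souslin tree and `f : S → T` is a weak embedding from a
`κ`-tree `S`, then the image of the set `S'` of nodes of `S` with `κ`-many
extensions has size `κ`. -/
theorem weak_embedding_image_large
    (κ : Cardinal) (hreg : κ.IsRegular) (hunc : ℵ₀ < κ)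
    (α β : Type) [PartialOrder α] [PartialOrder β]
    (hS : IsKTree κ α) (hT : IsKTree κ β)
    (hTsous : RelSouslin ((· < ·) : β → β → Prop) κ)
    (f : α → β) (hf : ∀ s s' : α, s < s' → f s < f s') :
    #(f '' {s : α | #{y : α | s < y} = κ}) = κ :=
  image_large hreg hS hT f hf

end
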